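/- arXiv:2601.13791 — 9 statements merged into one kernel-verified Lean document; each statement's English description precedes it below -/
import Mathlib

section
/- Let (L, [-,-]) be a Lie algebra and let α, β : L → L be two commuting Lie algebra homomorphisms (i.e., α([a,b]) = [α(a),α(b)] and β([a,b]) = [β(a),β(b)]). Define a new bracket {a,b} := [α(a), β(b)]. Then (L, {-,-}, α, β) is a BiHom-Lie algebra; that is, {-,-} is multiplicative with respect to α and β, satisfies BiHom-antisymmetry {β(x), α(y)} = -{β(y), α(x)}, and the BiHom-Jacobi condition {β²(x), {β(y), α(z)}} + {β²(y), {β(z), α(x)}} + {β²(z), {β(x), α(y)}} = 0. -/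
set_option maxSynthPendingDepth 2

open TensorProduct

variable {K : Type} [Field K] {L : Type} [AddCommGroup L] [Module K L]
variable {V : Type} [AddCommGroup V] [Module K V]

/-- The flip map on `L ⊗ L`. -/
noncomputable def tau (K L : Type) [Field K] [AddCommGroup L] [Module K L] :
    L ⊗[K] L →ₗ[K] L ⊗[K] L := (TensorProduct.comm K L L).toLinearMap

/-- The cyclic permutation `x ⊗ (y ⊗ z) ↦ z ⊗ (x ⊗ y)` on `L ⊗ (L ⊗ L)`. -/
noncomputable def cyc (K L : Type) [Field K] [AddCommGroup L] [Module K L] :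
    L ⊗[K] (L ⊗[K] L) →ₗ[K] L ⊗[K] (L ⊗[K] L) :=
  (TensorProduct.comm K (L ⊗[K] L) L).toLinearMap ∘ₗ
    (TensorProduct.assoc K L L L).symm.toLinearMap

/-- The pairing `⟨f ⊗ g, -⟩ : L ⊗ L → K`. -/
noncomputable def pair (f g : Module.Dual K L) : L ⊗[K] L →ₗ[K] K :=
  TensorProduct.lift ((LinearMap.mul K K).compl₁₂ f g)

/-- The transpose (dual) of an endomorphism. -/
noncomputable def tpose (f : L →ₗ[K] L) : Module.Dual K L →ₗ[K] Module.Dual K L :=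
  Module.Dual.transpose (R := K) f

/-- The dual representation map `ρ*` with `⟨ρ*(x)v*, v⟩ = −⟨v*, ρ(x)v⟩`. -/
noncomputable def negDualRep (ρ : L →ₗ[K] V →ₗ[K] V) :
    L →ₗ[K] Module.Dual K V →ₗ[K] Module.Dual K V :=
  -(LinearMap.comp (Module.Dual.transpose (R := K)) ρ :
      L →ₗ[K] Module.Dual K V →ₗ[K] Module.Dual K V)

/-- BiHom-Lie algebra conditions. -/
def IsBiHomLie (b : L →ₗ[K] L →ₗ[K] L) (α β : L →ₗ[K] L) : Prop :=
  (∀ x, α (β x) = β (α x)) ∧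
  (∀ x y, α (b x y) = b (α x) (α y)) ∧
  (∀ x y, β (b x y) = b (β x) (β y)) ∧
  (∀ x y, b (β x) (α y) = - b (β y) (α x)) ∧
  (∀ x y z, b (β (β x)) (b (β y) (α z)) + b (β (β y)) (b (β z) (α x)) +
      b (β (β z)) (b (β x) (α y)) = 0)

/-- The map `(id ⊗ β ⊗ α)(β² ⊗ Δ) ∘ Δ`. -/
noncomputable def coA (Δ : L →ₗ[K] L ⊗[K] L) (α β : L →ₗ[K] L) :
    L →ₗ[K] L ⊗[K] (L ⊗[K] L) :=
  TensorProduct.map LinearMap.id (TensorProduct.map β α) ∘ₗ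
    TensorProduct.map (β ∘ₗ β) Δ ∘ₗ Δ

/-- BiHom-Lie coalgebra conditions. -/
def IsBiHomLieCoalg (Δ : L →ₗ[K] L ⊗[K] L) (α β : L →ₗ[K] L) : Prop :=
  (∀ x, α (β x) = β (α x)) ∧
  Δ ∘ₗ α = TensorProduct.map α α ∘ₗ Δ ∧
  Δ ∘ₗ β = TensorProduct.map β β ∘ₗ Δ ∧
  TensorProduct.map β α ∘ₗ Δ + tau K L ∘ₗ TensorProduct.map β α ∘ₗ Δ = 0 ∧
  coA Δ α β + cyc K L ∘ₗ coA Δ α β + cyc K L ∘ₗ cyc K L ∘ₗ coA Δ α β = 0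

/-- The map `(id ⊗ Δ) ∘ Δ`. -/
noncomputable def coA0 (Δ : L →ₗ[K] L ⊗[K] L) : L →ₗ[K] L ⊗[K] (L ⊗[K] L) :=
  TensorProduct.map LinearMap.id Δ ∘ₗ Δ

/-- Lie coalgebra conditions. -/
def IsLieCoalg (Δ : L →ₗ[K] L ⊗[K] L) : Prop :=
  Δ + tau K L ∘ₗ Δ = 0 ∧
  coA0 Δ + cyc K L ∘ₗ coA0 Δ + cyc K L ∘ₗ cyc K L ∘ₗ coA0 Δ = 0

/-- Lie algebra conditions on a bilinear bracket. -/
def IsLieAlg (b : L →ₗ[K] L →ₗ[K] L) : Prop :=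
  (∀ x y, b x y = - b y x) ∧
  (∀ x y z, b x (b y z) + b y (b z x) + b z (b x y) = 0)

/-- The Lie bialgebra 1-cocycle compatibility condition. -/
def IsLieBialgCocycle (b : L →ₗ[K] L →ₗ[K] L) (Δ : L →ₗ[K] L ⊗[K] L) : Prop :=
  ∀ x y, Δ (b x y) =
    TensorProduct.map (b x) LinearMap.id (Δ y) + TensorProduct.map LinearMap.id (b x) (Δ y) -
    TensorProduct.map (b y) LinearMap.id (Δ x) - TensorProduct.map LinearMap.id (b y) (Δ x)

/-- Nijenhuis BiHom-Lie algebra conditions. -/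
def IsNijBiHomLie (b : L →ₗ[K] L →ₗ[K] L) (N α β : L →ₗ[K] L) : Prop :=
  IsBiHomLie b α β ∧ (∀ x, α (N x) = N (α x)) ∧ (∀ x, β (N x) = N (β x)) ∧
  (∀ x y, b (N x) (N y) = N (b (N x) y + b x (N y)) - N (N (b x y)))

/-- Nijenhuis BiHom-Lie coalgebra conditions. -/
def IsNijBiHomLieCoalg (Δ : L →ₗ[K] L ⊗[K] L) (N α β : L →ₗ[K] L) : Prop :=
  IsBiHomLieCoalg Δ α β ∧ (∀ x, α (N x) = N (α x)) ∧ (∀ x, β (N x) = N (β x)) ∧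
  TensorProduct.map N N ∘ₗ Δ + Δ ∘ₗ (N ∘ₗ N) =
    TensorProduct.map N LinearMap.id ∘ₗ Δ ∘ₗ N + TensorProduct.map LinearMap.id N ∘ₗ Δ ∘ₗ N

/-- Representation of a BiHom-Lie algebra. -/
def IsBiHomRep (b : L →ₗ[K] L →ₗ[K] L) (α β : L →ₗ[K] L)
    (ρ : L →ₗ[K] V →ₗ[K] V) (p q : V →ₗ[K] V) : Prop :=
  (∀ v, p (q v) = q (p v)) ∧
  (∀ x v, p (ρ x v) = ρ (α x) (p v)) ∧
  (∀ x v, q (ρ x v) = ρ (β x) (q v)) ∧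
  (∀ x y v, ρ (b (β x) y) (q v) = ρ (α (β x)) (ρ y v) - ρ (β y) (ρ (α x) v))

/-- Representation of a Nijenhuis BiHom-Lie algebra. -/
def IsNijBiHomRep (b : L →ₗ[K] L →ₗ[K] L) (N α β : L →ₗ[K] L)
    (ρ : L →ₗ[K] V →ₗ[K] V) (η p q : V →ₗ[K] V) : Prop :=
  IsBiHomRep b α β ρ p q ∧
  (∀ v, η (p v) = p (η v)) ∧ (∀ v, η (q v) = q (η v)) ∧
  (∀ x v, ρ (N x) (η v) = η (ρ (N x) v) + η (ρ x (η v)) - η (η (ρ x v)))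

/-- Differential Lie algebra of weight `l`. -/
def IsDiffLie (b : L →ₗ[K] L →ₗ[K] L) (d : L →ₗ[K] L) (l : K) : Prop :=
  IsLieAlg b ∧ ∀ x y, d (b x y) = b (d x) y + b x (d y) + l • b (d x) (d y)

/-- Lie algebra representation. -/
def IsLieRep (b : L →ₗ[K] L →ₗ[K] L) (ρ : L →ₗ[K] V →ₗ[K] V) : Prop :=
  ∀ x y v, ρ (b x y) v = ρ x (ρ y v) - ρ y (ρ x v)

/-- Representation of a differential Lie algebra of weight `l`. -/
def IsDiffLieRep (b : L →ₗ[K] L →ₗ[K] L) (d : L →ₗ[K] L) (l : K)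
    (ρ : L →ₗ[K] V →ₗ[K] V) (ξ : V →ₗ[K] V) : Prop :=
  IsLieRep b ρ ∧ ∀ x v, ξ (ρ x v) = ρ (d x) v + ρ x (ξ v) + l • ρ (d x) (ξ v)

/-- Semidirect-product bracket
`[(x,a),(y,b)] = ([x,y], ρ(x)b − ρ(g y)(h a))`. -/
noncomputable def sdBracket (b : L →ₗ[K] L →ₗ[K] L) (ρ : L →ₗ[K] V →ₗ[K] V)
    (g : L →ₗ[K] L) (h : V →ₗ[K] V) : (L × V) →ₗ[K] (L × V) →ₗ[K] L × V :=
  (b.compl₁₂ (LinearMap.fst K L V) (LinearMap.fst K L V)).compr₂ (LinearMap.inl K L V) +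
  ((ρ.compl₁₂ (LinearMap.fst K L V) (LinearMap.snd K L V)) -
    ((ρ ∘ₗ g).compl₁₂ (LinearMap.fst K L V) (h ∘ₗ LinearMap.snd K L V)).flip).compr₂
      (LinearMap.inr K L V)

/-- Matched-pair bracket
`[(x,a),(y,b)] = ([x,y] + h(a)y − h(b)x, [a,b]_V + ρ(x)b − ρ(y)a)`. -/
noncomputable def mpBracket (b : L →ₗ[K] L →ₗ[K] L) (bV : V →ₗ[K] V →ₗ[K] V)
    (ρ : L →ₗ[K] V →ₗ[K] V) (h : V →ₗ[K] L →ₗ[K] L) :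
    (L × V) →ₗ[K] (L × V) →ₗ[K] L × V :=
  (b.compl₁₂ (LinearMap.fst K L V) (LinearMap.fst K L V) +
    h.compl₁₂ (LinearMap.snd K L V) (LinearMap.fst K L V) -
    (h.compl₁₂ (LinearMap.snd K L V) (LinearMap.fst K L V)).flip).compr₂
      (LinearMap.inl K L V) +
  (bV.compl₁₂ (LinearMap.snd K L V) (LinearMap.snd K L V) +
    ρ.compl₁₂ (LinearMap.fst K L V) (LinearMap.snd K L V) -
    (ρ.compl₁₂ (LinearMap.fst K L V) (LinearMap.snd K L V)).flip).compr₂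
      (LinearMap.inr K L V)


theorem yau_twist_biHomLie (b : L →ₗ[K] L →ₗ[K] L) (α β : L →ₗ[K] L)
    (hcomm : ∀ x, α (β x) = β (α x))
    (hLie : IsLieAlg b)
    (hα : ∀ x y, α (b x y) = b (α x) (α y))
    (hβ : ∀ x y, β (b x y) = b (β x) (β y)) :
    IsBiHomLie (b.compl₁₂ α β) α β := by
  obtain ⟨hanti, hjac⟩ := hLie
  refine ⟨hcomm, ?_, ?_, ?_, ?_⟩
  · intro x y
    simp [LinearMap.compl₁₂_apply, hα, hcomm]
  · intro x y
    simp [LinearMap.compl₁₂_apply, hβ, hcomm]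
  · intro x y
    simp only [LinearMap.compl₁₂_apply]
    rw [hcomm, ← hcomm y, hanti]
  · intro x y z
    simp only [LinearMap.compl₁₂_apply, hβ]
    have e : ∀ w : L, β (β (α w)) = α (β (β w)) := by
      intro w; rw [← hcomm, ← hcomm]
    rw [e x, e y, e z, ← hcomm (β x), ← hcomm (β y), ← hcomm (β z)]
    exact hjac _ _ _
end

section
/- Let L be a finite-dimensional vector space with dual L*, let Δ : L → L ⊗ L be a linear map with dual bracket [-,-]_* = Δ* on L*, and let α, β : L → L be linear maps with duals α*, β*. Then (L*, [-,-]_*, α*, β*) is a BiHom-Lie algebra if and only if (L, Δ, α, β) is a BiHom-Lie coalgebra. -/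
set_option maxSynthPendingDepth 2

open TensorProduct

variable {K : Type} [Field K] {L : Type} [AddCommGroup L] [Module K L]
variable {V : Type} [AddCommGroup V] [Module K V]

/-!
Each axiom of `(L*, Δ*, α*, β*)` is the transpose of the corresponding coalgebra axiom:
evaluated at `x`, the BiHom-Jacobi sum for `f, g, h` is `⟨f ⊗ g ⊗ h, (1 + ξ + ξ²) ((id ⊗ β ⊗ α)
(β² ⊗ Δ) Δ x)⟩` with `ξ` the cyclic permutation, and similarly for the other axioms. Conversely,
the functionals `f ⊗ g` and `f ⊗ g ⊗ h` separate points of `L ⊗ L` and `L ⊗ (L ⊗ L)`, since the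
coordinate functionals of a tensor-product basis are of this form.
-/

open Module

theorem LinearMap.forall_dual_comp_eq_iff {R M X : Type*} [CommSemiring R] [AddCommMonoid M]
    [AddCommMonoid X] [Module R M] [Module R X] [Free R M] {A B : X →ₗ[R] M} :
    (∀ f : Dual R M, f ∘ₗ A = f ∘ₗ B) ↔ A = B := by
  refine ⟨fun h => LinearMap.ext fun x => ?_, by rintro rfl _; rfl⟩
  exact (Free.chooseBasis R M).ext_elem fun i => LinearMap.congr_fun (h (Basis.coord _ i)) x

namespace TensorProduct

variable {R M N P X : Type*} [CommSemiring R] [AddCommMonoid M] [AddCommMonoid N]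
  [AddCommMonoid P] [AddCommMonoid X] [Module R M] [Module R N] [Module R P] [Module R X]

theorem _root_.Module.Basis.tensorProduct_coord {ι κ : Type*} (b : Basis ι R M)
    (c : Basis κ R N) (i : ι) (j : κ) :
    (b.tensorProduct c).coord (i, j) = dualDistrib R M N (b.coord i ⊗ₜ c.coord j) := by
  ext m n
  simp [Basis.tensorProduct_repr_tmul_apply, mul_comm]

theorem dualDistrib_tmul_comp_map {M' N' : Type*} [AddCommMonoid M'] [AddCommMonoid N']
    [Module R M'] [Module R N'] (f : Dual R M') (g : Dual R N') (φ : M →ₗ[R] M')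
    (ψ : N →ₗ[R] N') :
    dualDistrib R M' N' (f ⊗ₜ g) ∘ₗ map φ ψ = dualDistrib R M N ((f ∘ₗ φ) ⊗ₜ (g ∘ₗ ψ)) := by
  ext m n
  simp

theorem dualDistrib_tmul_comp_comm (f : Dual R M) (g : Dual R N) :
    dualDistrib R N M (g ⊗ₜ f) ∘ₗ (TensorProduct.comm R M N).toLinearMap =
      dualDistrib R M N (f ⊗ₜ g) := by
  ext m n
  simp [mul_comm]

theorem forall_dualDistrib_tmul_comp_eq_iff [Free R M] [Free R N] {A B : X →ₗ[R] M ⊗[R] N} :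
    (∀ f g, dualDistrib R M N (f ⊗ₜ g) ∘ₗ A = dualDistrib R M N (f ⊗ₜ g) ∘ₗ B) ↔ A = B := by
  refine ⟨fun h => LinearMap.ext fun x => ?_, by rintro rfl _ _; rfl⟩
  refine ((Free.chooseBasis R M).tensorProduct (Free.chooseBasis R N)).ext_elem fun ⟨i, j⟩ => ?_
  simpa only [← Basis.coord_apply, Basis.tensorProduct_coord, LinearMap.comp_apply] using
    LinearMap.congr_fun (h _ _) x

theorem forall_dualDistrib_tmul_tmul_comp_eq_iff [Free R M] [Free R N] [Free R P]
    {A B : X →ₗ[R] M ⊗[R] (N ⊗[R] P)} :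
    (∀ f g h, dualDistrib R M (N ⊗[R] P) (f ⊗ₜ dualDistrib R N P (g ⊗ₜ h)) ∘ₗ A =
      dualDistrib R M (N ⊗[R] P) (f ⊗ₜ dualDistrib R N P (g ⊗ₜ h)) ∘ₗ B) ↔ A = B := by
  refine ⟨fun h => LinearMap.ext fun x => ?_, by rintro rfl _ _ _; rfl⟩
  let b := Free.chooseBasis R M
  let c := (Free.chooseBasis R N).tensorProduct (Free.chooseBasis R P)
  refine (b.tensorProduct c).ext_elem fun ⟨i, j, k⟩ => ?_
  simpa only [← Basis.coord_apply, Basis.tensorProduct_coord, LinearMap.comp_apply, c] using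
    LinearMap.congr_fun (h _ _ _) x

end TensorProduct

theorem pair_eq_dualDistrib (f g : Dual K L) : pair f g = dualDistrib K L L (f ⊗ₜ g) := by
  ext x y
  rfl

theorem tpose_apply (φ : L →ₗ[K] L) (f : Dual K L) : tpose φ f = f ∘ₗ φ := rfl

noncomputable def dualBracket (Δ : L →ₗ[K] L ⊗[K] L) : Dual K L →ₗ[K] Dual K L →ₗ[K] Dual K L :=
  (TensorProduct.mk K _ _).compr₂ (Dual.transpose (R := K) Δ ∘ₗ dualDistrib K L L)

theorem dualBracket_apply (Δ : L →ₗ[K] L ⊗[K] L) (f g : Dual K L) :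
    dualBracket Δ f g = dualDistrib K L L (f ⊗ₜ g) ∘ₗ Δ := rfl

section DualBracket

variable (Δ : L →ₗ[K] L ⊗[K] L) (α β : L →ₗ[K] L)

theorem tpose_comm_iff :
    (∀ f : Dual K L, tpose α (tpose β f) = tpose β (tpose α f)) ↔ ∀ x, α (β x) = β (α x) := by
  simp only [tpose_apply, LinearMap.comp_assoc]
  rw [LinearMap.forall_dual_comp_eq_iff, LinearMap.ext_iff]
  exact forall_congr' fun x => eq_comm

theorem tpose_dualBracket_iff (φ : L →ₗ[K] L) :
    (∀ f g, tpose φ (dualBracket Δ f g) = dualBracket Δ (tpose φ f) (tpose φ g)) ↔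
      Δ ∘ₗ φ = map φ φ ∘ₗ Δ := by
  simp only [tpose_apply, dualBracket_apply, LinearMap.comp_assoc, ← dualDistrib_tmul_comp_map]
  exact forall_dualDistrib_tmul_comp_eq_iff

theorem dualBracket_biHomAntisymm_iff :
    (∀ f g, dualBracket Δ (tpose β f) (tpose α g) = -dualBracket Δ (tpose β g) (tpose α f)) ↔
      map β α ∘ₗ Δ + tau K L ∘ₗ map β α ∘ₗ Δ = 0 := by
  rw [← forall_dualDistrib_tmul_comp_eq_iff]
  refine forall₂_congr fun f g => ?_
  rw [eq_neg_iff_add_eq_zero, LinearMap.comp_zero, LinearMap.comp_add, tau,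
    ← LinearMap.comp_assoc _ (TensorProduct.comm K L L).toLinearMap, dualDistrib_tmul_comp_comm]
  simp only [tpose_apply, dualBracket_apply, LinearMap.comp_assoc, ← dualDistrib_tmul_comp_map]

theorem dualBracket_tpose_tpose_eq_comp_coA (f g h : Dual K L) :
    dualBracket Δ (tpose β (tpose β f)) (dualBracket Δ (tpose β g) (tpose α h)) =
      dualDistrib K L (L ⊗[K] L) (f ⊗ₜ dualDistrib K L L (g ⊗ₜ h)) ∘ₗ coA Δ α β := by
  simp only [coA, tpose_apply, dualBracket_apply, ← LinearMap.comp_assoc,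
    dualDistrib_tmul_comp_map, LinearMap.comp_id]

theorem dualDistrib_tmul_tmul_comp_cyc (f g h : Dual K L) :
    dualDistrib K L (L ⊗[K] L) (f ⊗ₜ dualDistrib K L L (g ⊗ₜ h)) ∘ₗ cyc K L =
      dualDistrib K L (L ⊗[K] L) (g ⊗ₜ dualDistrib K L L (h ⊗ₜ f)) := by
  ext x y z
  simp [cyc, mul_comm, mul_left_comm]

theorem dualBracket_biHomJacobi_iff :
    (∀ f g h, dualBracket Δ (tpose β (tpose β f)) (dualBracket Δ (tpose β g) (tpose α h)) +
        dualBracket Δ (tpose β (tpose β g)) (dualBracket Δ (tpose β h) (tpose α f)) +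
        dualBracket Δ (tpose β (tpose β h)) (dualBracket Δ (tpose β f) (tpose α g)) = 0) ↔
      coA Δ α β + cyc K L ∘ₗ coA Δ α β + cyc K L ∘ₗ cyc K L ∘ₗ coA Δ α β = 0 := by
  rw [← forall_dualDistrib_tmul_tmul_comp_eq_iff]
  refine forall₃_congr fun f g h => ?_
  simp only [LinearMap.comp_zero, LinearMap.comp_add, ← LinearMap.comp_assoc,
    dualDistrib_tmul_tmul_comp_cyc, dualBracket_tpose_tpose_eq_comp_coA]

end DualBracket

theorem dual_biHomLie_iff_biHomLieCoalg_general
    (Δ : L →ₗ[K] L ⊗[K] L) (α β : L →ₗ[K] L)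
    (bs : Module.Dual K L →ₗ[K] Module.Dual K L →ₗ[K] Module.Dual K L)
    (hdual : ∀ f g x, bs f g x = pair f g (Δ x)) :
    IsBiHomLie (L := Module.Dual K L) bs (tpose α) (tpose β) ↔ IsBiHomLieCoalg Δ α β := by
  obtain rfl : bs = dualBracket Δ := by
    ext f g x
    rw [hdual, pair_eq_dualDistrib]
    rfl
  exact and_congr (tpose_comm_iff α β) <| and_congr (tpose_dualBracket_iff Δ α) <|
    and_congr (tpose_dualBracket_iff Δ β) <|
    and_congr (dualBracket_biHomAntisymm_iff Δ α β) (dualBracket_biHomJacobi_iff Δ α β)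

theorem dual_biHomLie_iff_biHomLieCoalg [FiniteDimensional K L]
    (Δ : L →ₗ[K] L ⊗[K] L) (α β : L →ₗ[K] L)
    (bs : Module.Dual K L →ₗ[K] Module.Dual K L →ₗ[K] Module.Dual K L)
    (hdual : ∀ f g x, bs f g x = pair f g (Δ x)) :
    IsBiHomLie (L := Module.Dual K L) bs (tpose α) (tpose β) ↔ IsBiHomLieCoalg Δ α β :=
  dual_biHomLie_iff_biHomLieCoalg_general Δ α β bs hdual
end

section
/- Let (L, Δ) be a Lie coalgebra and let α, β : L → L be two commuting Lie coalgebra homomorphisms, i.e., Δ∘α = (α⊗α)∘Δ and Δ∘β = (β⊗β)∘Δ. Define a new coproduct ▲ := (α⊗β)∘Δ. Then (L, ▲, α, β) is a BiHom-Lie coalgebra. -/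
set_option maxSynthPendingDepth 2

open TensorProduct

variable {K : Type} [Field K] {L : Type} [AddCommGroup L] [Module K L]
variable {V : Type} [AddCommGroup V] [Module K V]

theorem yau_twist_biHomLieCoalg (Δ : L →ₗ[K] L ⊗[K] L) (α β : L →ₗ[K] L)
    (hco : IsLieCoalg Δ) (hcomm : ∀ x, α (β x) = β (α x))
    (hα : Δ ∘ₗ α = TensorProduct.map α α ∘ₗ Δ)
    (hβ : Δ ∘ₗ β = TensorProduct.map β β ∘ₗ Δ) :
    IsBiHomLieCoalg (TensorProduct.map α β ∘ₗ Δ) α β := by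
  have hαβ : α ∘ₗ β = β ∘ₗ α := LinearMap.ext hcomm
  have htau : ∀ f : L →ₗ[K] L,
      tau K L ∘ₗ TensorProduct.map f f = TensorProduct.map f f ∘ₗ tau K L := by
    intro f
    apply TensorProduct.ext'
    intro a b
    simp [tau]
  have hcyc : ∀ f : L →ₗ[K] L,
      cyc K L ∘ₗ TensorProduct.map f (TensorProduct.map f f) =
        TensorProduct.map f (TensorProduct.map f f) ∘ₗ cyc K L := by
    intro f
    apply TensorProduct.ext'
    intro a t
    induction t using TensorProduct.induction_on with
    | zero => simp
    | tmul b c => simp [cyc]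
    | add u v hu hv =>
        simp only [TensorProduct.tmul_add, map_add] at hu hv ⊢
        rw [hu, hv]
  refine ⟨hcomm, ?_, ?_, ?_, ?_⟩
  · rw [LinearMap.comp_assoc, hα, ← LinearMap.comp_assoc, ← TensorProduct.map_comp,
      ← LinearMap.comp_assoc, ← TensorProduct.map_comp, hαβ]
  · rw [LinearMap.comp_assoc, hβ, ← LinearMap.comp_assoc, ← TensorProduct.map_comp,
      ← LinearMap.comp_assoc, ← TensorProduct.map_comp, hαβ]
  · have h1 : TensorProduct.map β α ∘ₗ (TensorProduct.map α β ∘ₗ Δ) =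
        TensorProduct.map (β ∘ₗ α) (β ∘ₗ α) ∘ₗ Δ := by
      rw [← LinearMap.comp_assoc, ← TensorProduct.map_comp, hαβ]
    rw [h1, ← LinearMap.comp_assoc, htau, LinearMap.comp_assoc, ← LinearMap.comp_add,
      hco.1, LinearMap.comp_zero]
  · set T : L →ₗ[K] L := β ∘ₗ β ∘ₗ α with hT
    have key : coA (TensorProduct.map α β ∘ₗ Δ) α β =
        TensorProduct.map T (TensorProduct.map T T) ∘ₗ coA0 Δ := by
      unfold coA coA0
      have e1 : TensorProduct.map (LinearMap.id (M := L)) (TensorProduct.map β α) ∘ₗ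
          TensorProduct.map (β ∘ₗ β) (TensorProduct.map α β ∘ₗ Δ) =
          TensorProduct.map (β ∘ₗ β)
            (TensorProduct.map (β ∘ₗ α) (β ∘ₗ α) ∘ₗ Δ) := by
        rw [← TensorProduct.map_comp, LinearMap.id_comp, ← LinearMap.comp_assoc,
          ← TensorProduct.map_comp, hαβ]
      rw [← LinearMap.comp_assoc, ← LinearMap.comp_assoc, e1, LinearMap.comp_assoc,
        ← LinearMap.comp_assoc, ← TensorProduct.map_comp,
        ← LinearMap.comp_assoc Δ (TensorProduct.map LinearMap.id Δ),
        ← TensorProduct.map_comp, LinearMap.comp_id]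
      congr 2
      rw [LinearMap.comp_assoc, hβ, ← LinearMap.comp_assoc, ← TensorProduct.map_comp,
        LinearMap.comp_assoc β α β, hαβ]
    have hc1 : cyc K L ∘ₗ (TensorProduct.map T (TensorProduct.map T T) ∘ₗ coA0 Δ) =
        TensorProduct.map T (TensorProduct.map T T) ∘ₗ (cyc K L ∘ₗ coA0 Δ) := by
      rw [← LinearMap.comp_assoc, hcyc, LinearMap.comp_assoc]
    have hc2 : cyc K L ∘ₗ TensorProduct.map T (TensorProduct.map T T) ∘ₗ
        cyc K L ∘ₗ coA0 Δ = TensorProduct.map T (TensorProduct.map T T) ∘ₗ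
        cyc K L ∘ₗ cyc K L ∘ₗ coA0 Δ := by
      rw [← LinearMap.comp_assoc, hcyc, LinearMap.comp_assoc]
    rw [key, hc1, hc2, ← LinearMap.comp_add, ← LinearMap.comp_add, hco.2,
      LinearMap.comp_zero]
end

section
/- Let (L, [-,-], Δ) be a Lie bialgebra and let α, β : L → L be two commuting Lie bialgebra homomorphisms with α invertible. Define ▲ := (α⊗β)∘Δ and {x,y} := [α(x), β(y)], and let Ad_x(y) = {x,y}. Then (L, {-,-}, ▲, α, β) is a BiHom-Lie bialgebra: (L,{-,-},α,β) is a BiHom-Lie algebra, (L,▲,α,β) is a BiHom-Lie coalgebra, and ▲ satisfies the 1-cocycle condition ▲({α⁻¹β(x), y}) = Ad^(2)_{α(x)} ▲(y) − Ad^(2)_{α(y)} ▲(x), where Ad^(2)_x = Ad_{α⁻¹β(x)} ⊗ β + β ⊗ Ad_{α⁻²β²(x)}. -/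
set_option maxSynthPendingDepth 2

open TensorProduct

variable {K : Type} [Field K] {L : Type} [AddCommGroup L] [Module K L]
variable {V : Type} [AddCommGroup V] [Module K V]

private lemma mapMap (f g f' g' : L →ₗ[K] L) (t : L ⊗[K] L) :
    TensorProduct.map f g (TensorProduct.map f' g' t) =
      TensorProduct.map (f ∘ₗ f') (g ∘ₗ g') t := by
  rw [TensorProduct.map_comp]; rfl

private lemma tau_map (f : L →ₗ[K] L) :
    tau K L ∘ₗ TensorProduct.map f f = TensorProduct.map f f ∘ₗ tau K L := by
  ext u v
  simp [tau]

theorem yau_twist_biHomLie_bialgebra (b : L →ₗ[K] L →ₗ[K] L) (Δ : L →ₗ[K] L ⊗[K] L)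
    (α : L ≃ₗ[K] L) (β : L →ₗ[K] L)
    (hLie : IsLieAlg b) (hco : IsLieCoalg Δ) (hcocycle : IsLieBialgCocycle b Δ)
    (hcomm : ∀ x, α (β x) = β (α x))
    (hαb : ∀ x y, α (b x y) = b (α x) (α y))
    (hβb : ∀ x y, β (b x y) = b (β x) (β y))
    (hαΔ : Δ ∘ₗ α.toLinearMap = TensorProduct.map α.toLinearMap α.toLinearMap ∘ₗ Δ)
    (hβΔ : Δ ∘ₗ β = TensorProduct.map β β ∘ₗ Δ) :
    IsBiHomLie (b.compl₁₂ α.toLinearMap β) α.toLinearMap β ∧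
    IsBiHomLieCoalg (TensorProduct.map α.toLinearMap β ∘ₗ Δ) α.toLinearMap β ∧
    (∀ x y,
      (TensorProduct.map α.toLinearMap β ∘ₗ Δ)
          ((b.compl₁₂ α.toLinearMap β) (α.symm (β x)) y) =
        TensorProduct.map ((b.compl₁₂ α.toLinearMap β) (α.symm (β (α x)))) β
            ((TensorProduct.map α.toLinearMap β ∘ₗ Δ) y) +
          TensorProduct.map β
            ((b.compl₁₂ α.toLinearMap β) (α.symm (α.symm (β (β (α x))))))
            ((TensorProduct.map α.toLinearMap β ∘ₗ Δ) y) -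
          TensorProduct.map ((b.compl₁₂ α.toLinearMap β) (α.symm (β (α y)))) β
            ((TensorProduct.map α.toLinearMap β ∘ₗ Δ) x) -
          TensorProduct.map β
            ((b.compl₁₂ α.toLinearMap β) (α.symm (α.symm (β (β (α y))))))
            ((TensorProduct.map α.toLinearMap β ∘ₗ Δ) x)) := by
  have hBA : β ∘ₗ α.toLinearMap = α.toLinearMap ∘ₗ β := (LinearMap.ext hcomm).symm
  have hsymm : ∀ z, α.symm (β z) = β (α.symm z) := by
    intro z
    apply α.injective
    rw [LinearEquiv.apply_symm_apply, hcomm (α.symm z), LinearEquiv.apply_symm_apply]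
  have hαΔ' : ∀ z, Δ (α z) = TensorProduct.map α.toLinearMap α.toLinearMap (Δ z) := fun z =>
    LinearMap.congr_fun hαΔ z
  have hβΔ' : ∀ z, Δ (β z) = TensorProduct.map β β (Δ z) := fun z =>
    LinearMap.congr_fun hβΔ z
  refine ⟨⟨hcomm, ?_, ?_, ?_, ?_⟩, ⟨hcomm, ?_, ?_, ?_, ?_⟩, ?_⟩
  · intro x y
    simp only [LinearMap.compl₁₂_apply, LinearEquiv.coe_coe]
    rw [hαb, hcomm]
  · intro x y
    simp only [LinearMap.compl₁₂_apply, LinearEquiv.coe_coe]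
    rw [hβb, ← hcomm]
  · intro x y
    simp only [LinearMap.compl₁₂_apply, LinearEquiv.coe_coe]
    rw [← hcomm, ← hcomm]
    exact hLie.1 _ _
  · intro x y z
    have key : ∀ u v w : L,
        (b.compl₁₂ α.toLinearMap β) (β (β u)) ((b.compl₁₂ α.toLinearMap β) (β v) (α.toLinearMap w)) =
          α (β (β (b u (b v w)))) := by
      intro u v w
      simp only [LinearMap.compl₁₂_apply, LinearEquiv.coe_coe]
      simp only [hcomm, ← hβb, ← hαb]
    rw [key x y z, key y z x, key z x y]
    simp only [← map_add]
    rw [hLie.2 x y z, map_zero, map_zero, map_zero]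
  · apply LinearMap.ext; intro z
    simp only [LinearMap.comp_apply, LinearEquiv.coe_coe]
    rw [hαΔ' z, mapMap, mapMap, hBA]
  · apply LinearMap.ext; intro z
    simp only [LinearMap.comp_apply, LinearEquiv.coe_coe]
    rw [hβΔ' z, mapMap, mapMap, hBA]
  · have h1 : TensorProduct.map β α.toLinearMap ∘ₗ (TensorProduct.map α.toLinearMap β ∘ₗ Δ) =
        TensorProduct.map (α.toLinearMap ∘ₗ β) (α.toLinearMap ∘ₗ β) ∘ₗ Δ := by
      rw [← LinearMap.comp_assoc, ← TensorProduct.map_comp, hBA]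
    rw [h1, ← LinearMap.comp_assoc, tau_map, LinearMap.comp_assoc,
      ← LinearMap.comp_add, hco.1, LinearMap.comp_zero]
  · set g' := α.toLinearMap ∘ₗ (β ∘ₗ β) with hg'
    have hM2 : TensorProduct.map β α.toLinearMap ∘ₗ
        (TensorProduct.map α.toLinearMap β ∘ₗ TensorProduct.map β β) =
        TensorProduct.map g' g' := by
      ext p q
      simp [hg', hcomm, LinearEquiv.coe_coe]
    have hC : coA (TensorProduct.map α.toLinearMap β ∘ₗ Δ) α.toLinearMap β =
        TensorProduct.map g' (TensorProduct.map g' g') ∘ₗ coA0 Δ := by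
      apply LinearMap.ext; intro z
      simp only [coA, coA0, LinearMap.comp_apply]
      generalize Δ z = t
      induction t using TensorProduct.induction_on with
      | zero => simp
      | tmul u v =>
        simp only [TensorProduct.map_tmul, LinearMap.comp_apply, LinearMap.id_coe,
          id_eq]
        rw [hβΔ' v]
        have h2 : TensorProduct.map β α.toLinearMap (TensorProduct.map α.toLinearMap β
            (TensorProduct.map β β (Δ v))) = TensorProduct.map g' g' (Δ v) :=
          LinearMap.congr_fun hM2 (Δ v)
        rw [h2]
        have e1 : β (β (α.toLinearMap u)) = g' u := by simp [hg', hcomm]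
        rw [e1]
      | add s t hs ht => simp only [map_add, hs, ht]
    have hcyc : cyc K L ∘ₗ TensorProduct.map g' (TensorProduct.map g' g') =
        TensorProduct.map g' (TensorProduct.map g' g') ∘ₗ cyc K L := by
      ext u v w
      simp [cyc]
    have swap : ∀ (F : L →ₗ[K] L ⊗[K] (L ⊗[K] L)),
        cyc K L ∘ₗ (TensorProduct.map g' (TensorProduct.map g' g') ∘ₗ F) =
          TensorProduct.map g' (TensorProduct.map g' g') ∘ₗ (cyc K L ∘ₗ F) :=
      fun F => by rw [← LinearMap.comp_assoc, hcyc, LinearMap.comp_assoc]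
    rw [hC, swap, swap, ← LinearMap.comp_add, ← LinearMap.comp_add, hco.2,
      LinearMap.comp_zero]
  · intro x y
    have k1c : ∀ z : L,
        TensorProduct.map ((b.compl₁₂ α.toLinearMap β) (α.symm (β (α z)))) β ∘ₗ
            TensorProduct.map α.toLinearMap β =
          TensorProduct.map α.toLinearMap β ∘ₗ (TensorProduct.map β β ∘ₗ
            TensorProduct.map (b z) LinearMap.id) := by
      intro z
      ext u v
      simp only [TensorProduct.AlgebraTensorModule.curry_apply, TensorProduct.curry_apply,
        LinearMap.coe_restrictScalars, LinearMap.comp_apply, TensorProduct.map_tmul,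
        LinearMap.compl₁₂_apply, LinearMap.id_coe, id_eq, LinearEquiv.coe_coe,
        LinearEquiv.apply_symm_apply]
      simp only [hcomm, ← hβb, ← hαb]
    have k2c : ∀ z : L,
        TensorProduct.map β ((b.compl₁₂ α.toLinearMap β) (α.symm (α.symm (β (β (α z)))))) ∘ₗ
            TensorProduct.map α.toLinearMap β =
          TensorProduct.map α.toLinearMap β ∘ₗ (TensorProduct.map β β ∘ₗ
            TensorProduct.map LinearMap.id (b z)) := by
      intro z
      ext u v
      simp only [TensorProduct.AlgebraTensorModule.curry_apply, TensorProduct.curry_apply,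
        LinearMap.coe_restrictScalars, LinearMap.comp_apply, TensorProduct.map_tmul,
        LinearMap.compl₁₂_apply, LinearMap.id_coe, id_eq, LinearEquiv.coe_coe,
        hsymm, LinearEquiv.symm_apply_apply, LinearEquiv.apply_symm_apply]
      simp only [hcomm, hsymm, LinearEquiv.apply_symm_apply,
        LinearEquiv.symm_apply_apply, ← hβb, ← hαb]
    have k1 : ∀ (z : L) (t : L ⊗[K] L),
        TensorProduct.map ((b.compl₁₂ α.toLinearMap β) (α.symm (β (α z)))) β
            (TensorProduct.map α.toLinearMap β t) =
          TensorProduct.map α.toLinearMap β (TensorProduct.map β β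
            (TensorProduct.map (b z) LinearMap.id t)) :=
      fun z t => LinearMap.congr_fun (k1c z) t
    have k2 : ∀ (z : L) (t : L ⊗[K] L),
        TensorProduct.map β ((b.compl₁₂ α.toLinearMap β) (α.symm (α.symm (β (β (α z))))))
            (TensorProduct.map α.toLinearMap β t) =
          TensorProduct.map α.toLinearMap β (TensorProduct.map β β
            (TensorProduct.map LinearMap.id (b z) t)) :=
      fun z t => LinearMap.congr_fun (k2c z) t
    have harg : (b.compl₁₂ α.toLinearMap β) (α.symm (β x)) y = β (b x y) := by
      simp only [LinearMap.compl₁₂_apply, LinearEquiv.coe_coe,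
        LinearEquiv.apply_symm_apply, ← hβb]
    simp only [LinearMap.comp_apply, harg]
    rw [hβΔ' (b x y), hcocycle x y]
    simp only [map_add, map_sub]
    rw [k1 x (Δ y), k2 x (Δ y), k1 y (Δ x), k2 y (Δ x)]
end

section
/- Let (L, [-,-], α, β) be an involutive BiHom-Lie algebra (α² = β² = id). Then (V, ρ, p, q) is a representation of (L, [-,-], α, β) if and only if (V*, ρ*, p*, q*) is a representation of (L, [-,-], α, β), where ⟨ρ*(x)(a*), a⟩ = −⟨a*, ρ(x)a⟩, ⟨p*(a*), a⟩ = ⟨a*, p(a)⟩, ⟨q*(a*), a⟩ = ⟨a*, q(a)⟩. -/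
set_option maxSynthPendingDepth 2

open TensorProduct

variable {K : Type} [Field K] {L : Type} [AddCommGroup L] [Module K L]
variable {V : Type} [AddCommGroup V] [Module K V]

lemma dual_sep {K : Type} [Field K] {V : Type} [AddCommGroup V] [Module K V]
    {a c : V} (h : ∀ f : Module.Dual K V, f a = f c) : a = c := by
  have : ∀ f : Module.Dual K V, f (a - c) = 0 := by
    intro f; rw [map_sub, h f, sub_self]
  exact sub_eq_zero.mp ((Module.forall_dual_apply_eq_zero_iff K (a - c)).mp this)

lemma negDualRep_apply {K : Type} [Field K] {L : Type} [AddCommGroup L] [Module K L]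
    {V : Type} [AddCommGroup V] [Module K V] (ρ : L →ₗ[K] V →ₗ[K] V)
    (x : L) (f : Module.Dual K V) (v : V) :
    negDualRep ρ x f v = -(f (ρ x v)) := rfl

lemma tpose_apply_s12 {K : Type} [Field K] {V : Type} [AddCommGroup V] [Module K V]
    (g : V →ₗ[K] V) (f : Module.Dual K V) (v : V) :
    tpose (L := V) g f v = f (g v) := rfl

theorem rep_iff_dual_rep [FiniteDimensional K V] (b : L →ₗ[K] L →ₗ[K] L)
    (α β : L →ₗ[K] L) (hL : IsBiHomLie b α β)
    (hαi : ∀ x, α (α x) = x) (hβi : ∀ x, β (β x) = x)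
    (ρ : L →ₗ[K] V →ₗ[K] V) (p q : V →ₗ[K] V) :
    IsBiHomRep b α β ρ p q ↔
      IsBiHomRep (V := Module.Dual K V) b α β (negDualRep ρ)
        (tpose (L := V) p) (tpose (L := V) q) := by
  obtain ⟨-, -, hβb, -, -⟩ := hL
  constructor
  · rintro ⟨h1, h2, h3, h4⟩
    refine ⟨fun f => ?_, fun x f => ?_, fun x f => ?_, fun x y f => ?_⟩ <;>
      (ext v; simp only [negDualRep_apply, tpose_apply_s12, LinearMap.sub_apply, neg_neg,
        neg_sub, map_neg, neg_inj])
    · rw [h1]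
    · rw [h2, hαi]
    · rw [h3, hβi]
    · have key : q (ρ (b (β x) y) v) =
          ρ (α x) (ρ (β y) v) - ρ y (ρ (α (β x)) v) := by
        have := h4 (β x) (β y) v
        rw [hβi, hβi] at this
        rw [h3, hβb, hβi, this]
      rw [key, map_sub]
      abel
  · rintro ⟨h1, h2, h3, h4⟩
    have H1 : ∀ v, q (p v) = p (q v) := by
      intro v
      refine dual_sep (K := K) fun f => ?_
      have := congrFun (congrArg DFunLike.coe (h1 f)) v
      simpa [tpose_apply_s12] using this
    have H2 : ∀ x v, ρ x (p v) = p (ρ (α x) v) := by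
      intro x v
      refine dual_sep (K := K) fun f => ?_
      have := congrFun (congrArg DFunLike.coe (h2 x f)) v
      simpa [tpose_apply_s12, negDualRep_apply, neg_inj] using this
    have H3 : ∀ x v, ρ x (q v) = q (ρ (β x) v) := by
      intro x v
      refine dual_sep (K := K) fun f => ?_
      have := congrFun (congrArg DFunLike.coe (h3 x f)) v
      simpa [tpose_apply_s12, negDualRep_apply, neg_inj] using this
    have H4 : ∀ x y v, q (ρ (b (β x) y) v) =
        ρ (α x) (ρ (β y) v) - ρ y (ρ (α (β x)) v) := by
      intro x y v
      refine dual_sep (K := K) fun f => ?_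
      have := congrFun (congrArg DFunLike.coe (h4 x y f)) v
      simp only [negDualRep_apply, tpose_apply_s12, LinearMap.sub_apply, neg_neg, neg_sub,
        map_neg, map_sub, neg_inj] at this ⊢
      linear_combination -this
    refine ⟨fun v => (H1 v).symm, fun x v => ?_, fun x v => ?_, fun x y v => ?_⟩
    · rw [H2 (α x), hαi]
    · rw [H3 (β x), hβi]
    · have := H4 (β x) (β y) v
      rw [hβi, hβi] at this
      rw [H3, hβb, hβi]
      exact this
end

section
/- Let (L, [-,-], d) be a differential Lie algebra of weight λ and let V be a vector space with linear maps ρ : L → gl(V) and ξ : V → V. Then (V, ρ, ξ) is a representation of (L, [-,-], d) if and only if (L ⊕ V, [-,-]_{L⊕V}, d+ξ) is a differential Lie algebra of weight λ, where [x+a, y+b]_{L⊕V} := [x,y] + ρ(x)b − ρ(y)a. -/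
set_option maxSynthPendingDepth 2

open TensorProduct

variable {K : Type} [Field K] {L : Type} [AddCommGroup L] [Module K L]
variable {V : Type} [AddCommGroup V] [Module K V]

lemma sdBracket_apply (b : L →ₗ[K] L →ₗ[K] L) (ρ : L →ₗ[K] V →ₗ[K] V)
    (x y : L) (a c : V) :
    sdBracket b ρ LinearMap.id LinearMap.id (x, a) (y, c) =
      (b x y, ρ x c - ρ y a) := by
  simp [sdBracket, Prod.ext_iff]

theorem diffRep_iff_semidirect' (b : L →ₗ[K] L →ₗ[K] L) (d : L →ₗ[K] L) (l : K)
    (ρ : L →ₗ[K] V →ₗ[K] V) (ξ : V →ₗ[K] V)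
    (hL : IsDiffLie b d l) :
    IsDiffLieRep b d l ρ ξ ↔
      IsDiffLie (sdBracket b ρ LinearMap.id LinearMap.id) (d.prodMap ξ) l := by
  obtain ⟨⟨hanti, hjac⟩, hder⟩ := hL
  constructor
  · rintro ⟨hrep, hdrep⟩
    refine ⟨⟨?_, ?_⟩, ?_⟩
    · rintro ⟨x, a⟩ ⟨y, c⟩
      simp only [sdBracket_apply, Prod.neg_mk, Prod.ext_iff]
      exact ⟨hanti x y, by abel⟩
    · rintro ⟨x, a⟩ ⟨y, c⟩ ⟨z, e⟩
      simp only [sdBracket_apply, map_sub, Prod.mk_add_mk, Prod.ext_iff, Prod.mk_eq_zero, Prod.fst_zero, Prod.snd_zero]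
      refine ⟨hjac x y z, ?_⟩
      rw [hrep y z a, hrep z x c, hrep x y e]
      abel
    · rintro ⟨x, a⟩ ⟨y, c⟩
      simp only [sdBracket_apply, LinearMap.prodMap_apply, map_sub, Prod.smul_mk,
        Prod.mk_add_mk, Prod.ext_iff, smul_sub]
      refine ⟨hder x y, ?_⟩
      rw [hdrep x c, hdrep y a]
      abel
  · rintro ⟨⟨-, hjacP⟩, hderP⟩
    constructor
    · intro x y v
      have := hjacP (x, 0) (y, 0) (0, v)
      simp only [sdBracket_apply, map_zero, map_sub, sub_zero, zero_sub, map_neg,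
        Prod.mk_add_mk, Prod.mk_eq_zero, add_zero, zero_add] at this
      have h2 := this.2
      -- h2 : ρ x (ρ y v) + (-(ρ y (ρ x v)) + -(ρ (b x y) v)) = 0 or similar
      linear_combination (norm := (push_cast; abel)) -h2
    · intro x v
      have := hderP (x, 0) (0, v)
      simp only [sdBracket_apply, LinearMap.prodMap_apply, map_zero, map_sub, sub_zero,
        Prod.smul_mk, Prod.mk_add_mk, Prod.ext_iff, smul_zero, add_zero, zero_add] at this
      exact this.2


theorem diffRep_iff_semidirect (b : L →ₗ[K] L →ₗ[K] L) (d : L →ₗ[K] L) (l : K)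
    (ρ : L →ₗ[K] V →ₗ[K] V) (ξ : V →ₗ[K] V)
    (hL : IsDiffLie b d l) :
    IsDiffLieRep b d l ρ ξ ↔
      IsDiffLie (sdBracket b ρ LinearMap.id LinearMap.id) (d.prodMap ξ) l := by
  exact diffRep_iff_semidirect' b d l ρ ξ hL
end

section
/- Let (L, [-,-], d) be a differential Lie algebra of weight λ, V a finite-dimensional vector space, ρ : L → gl(V) and ζ : V → V linear maps. Then (V*, ρ*, ζ*) is a representation of (L, [-,-], d) if and only if (V, ρ) is a representation of the Lie algebra (L, [-,-]) and ρ(x)ζ(b) = ρ(d(x))b + ζ(ρ(x)b) + λ ζ(ρ(d(x))b) for all x ∈ L, b ∈ V. -/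
set_option maxSynthPendingDepth 2

open TensorProduct

variable {K : Type} [Field K] {L : Type} [AddCommGroup L] [Module K L]
variable {V : Type} [AddCommGroup V] [Module K V]

lemma dual_eq_iff' {a a' : V} : a = a' ↔ ∀ f : Module.Dual K V, f a = f a' := by
  constructor
  · rintro rfl f; rfl
  · intro h
    rw [← sub_eq_zero, ← Module.forall_dual_apply_eq_zero_iff K]
    intro f
    simp [h f]

theorem dual_diffRep_iff [FiniteDimensional K V] (b : L →ₗ[K] L →ₗ[K] L)
    (d : L →ₗ[K] L) (l : K) (hL : IsDiffLie b d l)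
    (ρ : L →ₗ[K] V →ₗ[K] V) (ζ : V →ₗ[K] V) :
    IsDiffLieRep (V := Module.Dual K V) b d l (negDualRep ρ) (tpose (L := V) ζ) ↔
      (IsLieRep b ρ ∧
        ∀ x v, ρ x (ζ v) = ρ (d x) v + ζ (ρ x v) + l • ζ (ρ (d x) v)) := by
  constructor
  · rintro ⟨h1, h2⟩
    constructor
    · intro x y v
      rw [dual_eq_iff' (K := K)]
      intro f
      have := LinearMap.congr_fun (h1 x y f) v
      simp only [negDualRep, tpose, LinearMap.neg_apply, LinearMap.comp_apply,
        Module.Dual.transpose_apply, LinearMap.sub_apply, map_sub, map_add, map_neg,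
        map_smul, neg_neg] at this ⊢
      first | linear_combination this | linear_combination -this
    · intro x v
      rw [dual_eq_iff' (K := K)]
      intro f
      have := LinearMap.congr_fun (h2 x f) v
      simp only [negDualRep, tpose, LinearMap.neg_apply, LinearMap.comp_apply,
        Module.Dual.transpose_apply, LinearMap.add_apply, LinearMap.smul_apply,
        map_sub, map_add, map_neg, map_smul, smul_eq_mul, neg_neg, smul_neg] at this ⊢
      first | linear_combination this | linear_combination -this
  · rintro ⟨h1, h2⟩
    constructor
    · intro x y f
      ext v
      simp only [negDualRep, tpose, LinearMap.neg_apply, LinearMap.comp_apply,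
        Module.Dual.transpose_apply, LinearMap.sub_apply, map_sub, map_add, map_neg,
        map_smul, neg_neg]
      have := congrArg f (h1 x y v)
      simp only [map_sub] at this
      first | linear_combination this | linear_combination -this
    · intro x f
      ext v
      simp only [negDualRep, tpose, LinearMap.neg_apply, LinearMap.comp_apply,
        Module.Dual.transpose_apply, LinearMap.add_apply, LinearMap.smul_apply,
        map_sub, map_add, map_neg, map_smul, smul_eq_mul, neg_neg, smul_neg]
      have := congrArg f (h2 x v)
      simp only [map_add, map_smul, smul_eq_mul] at this
      first | linear_combination this | linear_combination -this
end

section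
/- Let (L, [-,-], d) be a finite-dimensional differential Lie algebra of weight λ and π : L → L a linear map. Then (L*, ad*, π*) is a representation of (L, [-,-], d) if and only if [x, π(y)] = [d(x), y] + π([x,y]) + λπ([d(x), y]) for all x, y ∈ L. -/
set_option maxSynthPendingDepth 2
open TensorProduct
variable {K : Type} [Field K] {L : Type} [AddCommGroup L] [Module K L]
variable {V : Type} [AddCommGroup V] [Module K V]
theorem coadjoint_diffRep_iff [FiniteDimensional K L] (b : L →ₗ[K] L →ₗ[K] L)
    (d : L →ₗ[K] L) (l : K) (hL : IsDiffLie b d l) (π : L →ₗ[K] L) :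
    IsDiffLieRep (V := Module.Dual K L) b d l (negDualRep b) (tpose π) ↔
      ∀ x y, b x (π y) = b (d x) y + π (b x y) + l • π (b (d x) y) := by
  obtain ⟨⟨hanti, hjac⟩, _⟩ := hL
  have heval : ∀ (x : L) (f : Module.Dual K L) (z : L),
      negDualRep b x f z = -f (b x z) := by
    intro x f z
    simp [negDualRep, Module.Dual.transpose_apply]
  have htp : ∀ (f : Module.Dual K L) (z : L), tpose π f z = f (π z) := by
    intro f z
    simp [tpose, Module.Dual.transpose_apply]
  have hlierep : IsLieRep (V := Module.Dual K L) b (negDualRep b) := by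
    intro x y f
    ext z
    have h1 := hjac x y z
    have h2 : b y (b z x) = - b y (b x z) := by rw [hanti z x]; simp
    have h3 : b z (b x y) = - b (b x y) z := hanti z (b x y)
    rw [h2, h3] at h1
    have h4 : b (b x y) z = b x (b y z) - b y (b x z) := by
      linear_combination (norm := module) -h1
    simp only [LinearMap.sub_apply, heval, h4, map_sub, map_neg, neg_neg, neg_sub]
  constructor
  · rintro ⟨-, h⟩ x y
    have key : ∀ f : Module.Dual K L,
        f (b x (π y) - (b (d x) y + π (b x y) + l • π (b (d x) y))) = 0 := by
      intro f
      have h2 := congrFun (congrArg DFunLike.coe (h x f)) y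
      simp only [LinearMap.add_apply, LinearMap.smul_apply, heval, htp, map_neg,
        map_add, map_sub, map_smul, smul_neg, smul_eq_mul] at h2 ⊢
      linear_combination -h2
    exact sub_eq_zero.mp ((Module.forall_dual_apply_eq_zero_iff K _).mp key)
  · intro h
    refine ⟨hlierep, ?_⟩
    intro x f
    ext y
    have h2 := congrArg f (h x y)
    simp only [map_add, map_smul, smul_eq_mul] at h2
    simp only [LinearMap.add_apply, LinearMap.smul_apply, heval, htp, smul_neg,
      smul_eq_mul]
    linear_combination -h2
end

section
/- Let (L, [-,-], d) and (V, [-,-]_V, ξ) be two differential Lie algebras of weight λ, and let ρ : L → gl(V) and h : V → gl(L) be linear maps such that (V, ρ, ξ) is a representation of L and (L, h, d) is a representation of V, and suppose the matched-pair compatibility conditions hold: [y, h(c)x] − [x, h(c)y] − h(ρ(y)c)(x) + h(ρ(x)c)(y) + h(c)([x,y]) = 0 and [b, ρ(z)a]_V − [a, ρ(z)b]_V − ρ(h(b)z)(a) + ρ(h(a)z)(b) + ρ(z)([a,b]_V) = 0 for x, y, z ∈ L and a, b, c ∈ V. Then L ⊕ V with bracket [x+a, y+b] := [x,y] + h(a)(y)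 − h(b)(x) + [a,b]_V + ρ(x)b − ρ(y)a and derivation (d+ξ)(x+a) := d(x) + ξ(a) is a differential Lie algebra of weight λ. -/
set_option maxSynthPendingDepth 2

open TensorProduct

variable {K : Type} [Field K] {L : Type} [AddCommGroup L] [Module K L]
variable {V : Type} [AddCommGroup V] [Module K V]

lemma mpBracket_apply (b : L →ₗ[K] L →ₗ[K] L) (bV : V →ₗ[K] V →ₗ[K] V)
    (ρ : L →ₗ[K] V →ₗ[K] V) (h : V →ₗ[K] L →ₗ[K] L) (x y : L) (a c : V) :
    mpBracket b bV ρ h (x, a) (y, c) =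
      (b x y + h a y - h c x, bV a c + ρ x c - ρ y a) := by
  simp [mpBracket]

theorem matched_pair_diffLie (b : L →ₗ[K] L →ₗ[K] L) (bV : V →ₗ[K] V →ₗ[K] V)
    (d : L →ₗ[K] L) (ξ : V →ₗ[K] V) (l : K)
    (ρ : L →ₗ[K] V →ₗ[K] V) (h : V →ₗ[K] L →ₗ[K] L)
    (hL : IsDiffLie b d l) (hV : IsDiffLie bV ξ l)
    (hρ : IsDiffLieRep b d l ρ ξ)
    (hh : IsDiffLieRep (L := V) (V := L) bV ξ l h d)
    (h41 : ∀ x y (c : V),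
      b y (h c x) - b x (h c y) - h (ρ y c) x + h (ρ x c) y + h c (b x y) = 0)
    (h42 : ∀ (z : L) (a c : V),
      bV c (ρ z a) - bV a (ρ z c) - ρ (h c z) a + ρ (h a z) c + ρ z (bV a c) = 0) :
    IsDiffLie (mpBracket b bV ρ h) (d.prodMap ξ) l := by
  obtain ⟨⟨banti, bjac⟩, bder⟩ := hL
  obtain ⟨⟨vanti, vjac⟩, vder⟩ := hV
  obtain ⟨ρrep, ρder⟩ := hρ
  obtain ⟨hrep, hder⟩ := hh
  refine ⟨⟨?_, ?_⟩, ?_⟩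
  · rintro ⟨x, a⟩ ⟨y, c⟩
    simp only [mpBracket_apply, Prod.neg_mk, Prod.mk.injEq]
    constructor
    · linear_combination (norm := module) banti x y
    · linear_combination (norm := module) vanti a c
  · rintro ⟨x, a⟩ ⟨y, c⟩ ⟨z, e⟩
    simp only [mpBracket_apply, map_add, map_sub, LinearMap.add_apply,
      LinearMap.sub_apply, Prod.mk_add_mk, Prod.mk.injEq, Prod.mk_eq_zero]
    constructor
    · linear_combination (norm := module) bjac x y z + h41 y z a + h41 z x c +
        h41 x y e - hrep c e x - hrep e a y - hrep a c z
    · linear_combination (norm := module) vjac a c e + h42 x c e + h42 y e a +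
        h42 z a c - ρrep y z a - ρrep z x c - ρrep x y e
  · rintro ⟨x, a⟩ ⟨y, c⟩
    simp only [mpBracket_apply, LinearMap.prodMap_apply, map_add, map_sub,
      Prod.mk_add_mk, Prod.mk_sub_mk, Prod.smul_mk, Prod.mk.injEq]
    constructor
    · linear_combination (norm := module) bder x y + hder a y - hder c x
    · linear_combination (norm := module) vder a c + ρder x c - ρder y a
end
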